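/- Let μ be a Borel probability measure on ℝ and let F : ℝ → ℝ be concave with ∫ |F(x+y)| μ(dy) < ∞ for every x ∈ ℝ, with right derivative F'_+ bounded above by some φ ∈ ℝ, and suppose F'_+(z) → L ∈ ℝ as z → ∞. Then the right derivative of g(x) := ∫ F(x+y) μ(dy) satisfies g'_+(x) → L as x → ∞. -/

import Mathlib

open MeasureTheory Filter Set Topology

/-! For concave `F` the right derivative `F'_+` is nonincreasing, hence squeezed between `L` and
`φ`; since every difference quotient of `F` lies between two values of `F'_+`, all of them lie in
`[L, φ]`. Dominated convergence then differentiates `g` under the integral sign,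
`g'_+(x) = ∫ F'_+(x + y) μ(dy)`, and a second application sends this to `L` as `x → ∞`. -/

namespace ConcaveOn
variable {S : Set ℝ} {F : ℝ → ℝ} {x y : ℝ}

lemma differentiableWithinAt_Ioi_of_mem_interior (hF : ConcaveOn ℝ S F) (hx : x ∈ interior S) :
    DifferentiableWithinAt ℝ F (Ioi x) x := by
  simpa using (hF.neg.differentiableWithinAt_Ioi_of_mem_interior hx).neg

lemma differentiableWithinAt_Iio_of_mem_interior (hF : ConcaveOn ℝ S F) (hx : x ∈ interior S) :
    DifferentiableWithinAt ℝ F (Iio x) x := by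
  simpa using (hF.neg.differentiableWithinAt_Iio_of_mem_interior hx).neg

lemma rightDeriv_le_leftDeriv_of_mem_interior (hF : ConcaveOn ℝ S F) (hx : x ∈ interior S) :
    derivWithin F (Ioi x) x ≤ derivWithin F (Iio x) x := by
  simpa [derivWithin.neg] using hF.neg.leftDeriv_le_rightDeriv_of_mem_interior hx

lemma antitoneOn_rightDeriv (hF : ConcaveOn ℝ S F) :
    AntitoneOn (fun x ↦ derivWithin F (Ioi x) x) (interior S) := by
  intro a ha b hb hab
  simpa [derivWithin.neg] using hF.neg.monotoneOn_rightDeriv ha hb hab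

lemma rightDeriv_le_slope_of_mem_interior (hF : ConcaveOn ℝ S F) (hx : x ∈ S)
    (hy : y ∈ interior S) (hxy : x < y) :
    derivWithin F (Ioi y) y ≤ slope F x y :=
  (hF.rightDeriv_le_leftDeriv_of_mem_interior hy).trans <|
    hF.leftDeriv_le_slope hx (interior_subset hy) hxy
      (hF.differentiableWithinAt_Iio_of_mem_interior hy)

end ConcaveOn

section TranslatedIntegral

variable {μ : Measure ℝ}

theorem hasDerivWithinAt_Ioi_integral_comp_add [IsFiniteMeasure μ] {F f : ℝ → ℝ} {C x : ℝ}
    (hint : ∀ t, Integrable (fun y ↦ F (t + y)) μ)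
    (hF' : ∀ z, HasDerivWithinAt F (f z) (Ioi z) z)
    (hslope : ∀ a b, a < b → |slope F a b| ≤ C) :
    HasDerivWithinAt (fun x ↦ ∫ y, F (x + y) ∂μ) (∫ y, f (x + y) ∂μ) (Ioi x) x := by
  have slope_integral :
      slope (fun x ↦ ∫ y, F (x + y) ∂μ) x = fun t ↦ ∫ y, slope F (x + y) (t + y) ∂μ := by
    ext t
    simp only [slope_def_field, add_sub_add_right_eq_sub]
    rw [integral_div, integral_sub (hint t) (hint x)]
  rw [hasDerivWithinAt_iff_tendsto_slope' self_notMem_Ioi, slope_integral]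
  refine tendsto_integral_filter_of_dominated_convergence (fun _ ↦ C) ?_ ?_
    (integrable_const C) (ae_of_all _ fun y ↦ ?_)
  · refine Eventually.of_forall fun t ↦ ?_
    simp only [slope_def_field, add_sub_add_right_eq_sub]
    exact (((hint t).sub (hint x)).div_const _).aestronglyMeasurable
  · filter_upwards [self_mem_nhdsWithin] with t (ht : x < t)
    exact ae_of_all _ fun y ↦ hslope _ _ (add_lt_add_left ht y)
  · exact ((hasDerivWithinAt_iff_tendsto_slope' self_notMem_Ioi).1 (hF' (x + y))).comp
      Filter.map_add_right_nhdsGT.le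

theorem tendsto_integral_comp_add_atTop [IsProbabilityMeasure μ] {f : ℝ → ℝ} {C L : ℝ}
    (hf : Measurable f) (hbound : ∀ z, |f z| ≤ C) (hL : Tendsto f atTop (𝓝 L)) :
    Tendsto (fun x ↦ ∫ y, f (x + y) ∂μ) atTop (𝓝 L) := by
  have hconst : ∫ _ : ℝ, L ∂μ = L := by simp
  rw [← hconst]
  refine tendsto_integral_filter_of_dominated_convergence (fun _ ↦ C)
    (Eventually.of_forall fun x ↦ (hf.comp (measurable_const_add x)).aestronglyMeasurable)
    (Eventually.of_forall fun x ↦ ae_of_all _ fun y ↦ hbound _) (integrable_const C)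
    (ae_of_all _ fun y ↦ hL.comp (tendsto_atTop_add_const_right atTop y tendsto_id))

end TranslatedIntegral

theorem right_deriv_of_integral_tendsto_general (μ : Measure ℝ) [IsProbabilityMeasure μ]
    (F : ℝ → ℝ) (hF : ConcaveOn ℝ Set.univ F)
    (hint : ∀ x : ℝ, Integrable (fun y : ℝ => F (x + y)) μ)
    (φ : ℝ) (hφ : ∀ z : ℝ, derivWithin F (Set.Ici z) z ≤ φ)
    (L : ℝ)
    (hL : Tendsto (fun z : ℝ => derivWithin F (Set.Ici z) z) atTop (nhds L)) :
    (∀ x : ℝ,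
      DifferentiableWithinAt ℝ (fun x : ℝ => ∫ y : ℝ, F (x + y) ∂μ) (Set.Ici x) x) ∧
    Tendsto (fun x : ℝ => derivWithin (fun x : ℝ => ∫ y : ℝ, F (x + y) ∂μ) (Set.Ici x) x)
      atTop (nhds L) := by
  simp only [← derivWithin_Ioi_eq_Ici, ← differentiableWithinAt_Ioi_iff_Ici] at hφ hL ⊢
  have hdiff (z : ℝ) : DifferentiableWithinAt ℝ F (Ioi z) z :=
    hF.differentiableWithinAt_Ioi_of_mem_interior (by simp)
  have hanti : Antitone fun z ↦ derivWithin F (Ioi z) z := by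
    simpa using hF.antitoneOn_rightDeriv
  have hL_le (z : ℝ) : L ≤ derivWithin F (Ioi z) z := hanti.le_of_tendsto hL z
  have hslope (a b : ℝ) (hab : a < b) : |slope F a b| ≤ max |L| |φ| :=
    abs_le_max_abs_abs
      ((hL_le b).trans (hF.rightDeriv_le_slope_of_mem_interior trivial (by simp) hab))
      ((hF.slope_le_rightDeriv trivial trivial hab (hdiff a)).trans (hφ a))
  have hderiv (x : ℝ) := hasDerivWithinAt_Ioi_integral_comp_add (x := x) hint
    (fun z ↦ (hdiff z).hasDerivWithinAt) hslope
  refine ⟨fun x ↦ (hderiv x).differentiableWithinAt, ?_⟩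
  refine (tendsto_integral_comp_add_atTop (μ := μ) hanti.measurable
    (fun z ↦ abs_le_max_abs_abs (hL_le z) (hφ z)) hL).congr fun x ↦ ?_
  exact ((hderiv x).derivWithin (uniqueDiffWithinAt_Ioi x)).symm

/-- Let `μ` be a Borel probability measure on `ℝ` and `F : ℝ → ℝ` concave with
`y ↦ F (x + y)` `μ`-integrable for every `x`, with right derivative `F'_+` (which exists
everywhere for a concave function) bounded above by some `φ`, and suppose `F'_+(z) → L` as
`z → ∞`.  Then the right derivative of `g(x) := ∫ F (x + y) μ(dy)` satisfies `g'_+(x) → L`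
as `x → ∞`.  Right derivatives are formalized via `derivWithin · (Ici z) z`. -/
theorem right_deriv_of_integral_tendsto (μ : Measure ℝ) [IsProbabilityMeasure μ]
    (F : ℝ → ℝ) (hF : ConcaveOn ℝ Set.univ F)
    (hint : ∀ x : ℝ, Integrable (fun y : ℝ => F (x + y)) μ)
    (hFdiff : ∀ z : ℝ, DifferentiableWithinAt ℝ F (Set.Ici z) z)
    (φ : ℝ) (hφ : ∀ z : ℝ, derivWithin F (Set.Ici z) z ≤ φ)
    (L : ℝ)
    (hL : Tendsto (fun z : ℝ => derivWithin F (Set.Ici z) z) atTop (nhds L)) :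
    (∀ x : ℝ,
      DifferentiableWithinAt ℝ (fun x : ℝ => ∫ y : ℝ, F (x + y) ∂μ) (Set.Ici x) x) ∧
    Tendsto (fun x : ℝ => derivWithin (fun x : ℝ => ∫ y : ℝ, F (x + y) ∂μ) (Set.Ici x) x)
      atTop (nhds L) :=
  right_deriv_of_integral_tendsto_general μ F hF hint φ hφ L hL
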